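/- Let s be a square image of level i with children ch(s), the four squares of level i+1 inside it, and let lc denote the distance to border-connectedness and elc(s) = min(2k_i, lc(s)) where k_i is the side length of s. Then lc(s) ≤ elc(s) + Σ_{q ∈ ch(s)} lc(q). -/

import Mathlib

open Finset

/-- Two pixels are adjacent if they are at Manhattan distance 1. -/
def Adj (p q : ℕ × ℕ) : Prop :=
  (p.1 = q.1 ∧ (p.2 + 1 = q.2 ∨ q.2 + 1 = p.2)) ∨
  (p.2 = q.2 ∧ (p.1 + 1 = q.1 ∨ q.1 + 1 = p.1))

/-- A pixel lies inside the `k × k` square (0-indexed coordinates). -/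
def InSquare (k : ℕ) (p : ℕ × ℕ) : Prop := p.1 < k ∧ p.2 < k

/-- A pixel is on the border of the `k × k` square. -/
def OnBorder (k : ℕ) (p : ℕ × ℕ) : Prop :=
  InSquare k p ∧ (p.1 = 0 ∨ p.1 = k - 1 ∨ p.2 = 0 ∨ p.2 = k - 1)

/-- One step of the image graph of the `k × k` image `s`: both pixels are black,
inside the square and adjacent. -/
def BlackAdj (k : ℕ) (s : ℕ × ℕ → Bool) (p q : ℕ × ℕ) : Prop :=
  InSquare k p ∧ InSquare k q ∧ s p = true ∧ s q = true ∧ Adj p q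

/-- A `k × k` image is border-connected if every black pixel is connected, through
black pixels, to a black pixel on the border. -/
def BorderConnected (k : ℕ) (s : ℕ × ℕ → Bool) : Prop :=
  ∀ p, InSquare k p → s p = true →
    ∃ q, OnBorder k q ∧ s q = true ∧ Relation.ReflTransGen (BlackAdj k s) p q

/-- Number of pixels of the `k × k` square on which `s` and `t` differ. -/
def diffCount (k : ℕ) (s t : ℕ × ℕ → Bool) : ℕ :=
  ((Finset.range k ×ˢ Finset.range k).filter (fun p => s p ≠ t p)).card

/-- Distance of a `k × k` image to border-connectedness. -/
noncomputable def distBC (k : ℕ) (s : ℕ × ℕ → Bool) : ℕ :=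
  sInf {d | ∃ t, BorderConnected k t ∧ diffCount k s t = d}

/-- An `n × n` image is connected if its image graph is connected. -/
def ImgConnected (n : ℕ) (M : ℕ × ℕ → Bool) : Prop :=
  ∀ p q, InSquare n p → InSquare n q → M p = true → M q = true →
    Relation.ReflTransGen (BlackAdj n M) p q

/-- Distance of an `n × n` image to connectedness. -/
noncomputable def distConn (n : ℕ) (M : ℕ × ℕ → Bool) : ℕ :=
  sInf {d | ∃ t, ImgConnected n t ∧ diffCount n M t = d}

/-- The subimage of `s` whose origin is at `(u, v)`. -/
def shiftIm (s : ℕ × ℕ → Bool) (u v : ℕ) : ℕ × ℕ → Bool :=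
  fun p => s (p.1 + u, p.2 + v)

/-- The image graph of an `n × n` image: vertices are black pixels inside the square,
edges connect pixels at Manhattan distance 1. -/
def imageGraph (n : ℕ) (M : ℕ × ℕ → Bool) :
    SimpleGraph {p : ℕ × ℕ // InSquare n p ∧ M p = true} where
  Adj := fun p q => Adj p.1 q.1
  symm := ⟨by intro p q h; unfold Adj at *; omega⟩
  loopless := ⟨by intro p h; unfold Adj at h; omega⟩

/-- The number of connected components of the image graph of an `n × n` image. -/
noncomputable def numComponents (n : ℕ) (M : ℕ × ℕ → Bool) : ℕ :=
  Nat.card (imageGraph n M).ConnectedComponent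

/-!
Write `k = 2m + 1`. Repair each of the four children optimally and paint the middle cross
black. The resulting image is border-connected: a black pixel of a quadrant is joined to the
border of its quadrant, which lies either on the border of the square or next to the cross, and
the cross meets the border. It differs from `s` in at most the `2k` cross pixels and the pixels
changed by the four repairs, so `lc(s) ≤ 2k + Σ lc(q)`; together with the trivial
`lc(s) ≤ lc(s) + Σ lc(q)` this is the claimed bound with `elc(s) = min(2k, lc(s))`.
-/

open Relation

lemma Adj.symm {p q : ℕ × ℕ} (h : Adj p q) : Adj q p := by
  unfold Adj at *; omega

instance (k : ℕ) (T : ℕ × ℕ → Bool) : Std.Symm (BlackAdj k T) where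
  symm _ _ := by
    rintro ⟨hp, hq, hTp, hTq, hpq⟩
    exact ⟨hq, hp, hTq, hTp, hpq.symm⟩

lemma distBC_le_diffCount {k : ℕ} {s t : ℕ × ℕ → Bool} (ht : BorderConnected k t) :
    distBC k s ≤ diffCount k s t :=
  Nat.sInf_le ⟨t, ht, rfl⟩

lemma exists_borderConnected_diffCount_eq_distBC (k : ℕ) (s : ℕ × ℕ → Bool) :
    ∃ t, BorderConnected k t ∧ diffCount k s t = distBC k s :=
  have white : BorderConnected k fun _ => false := fun _ _ h => absurd h Bool.false_ne_true
  Nat.sInf_mem (s := {d | ∃ t, BorderConnected k t ∧ diffCount k s t = d}) ⟨_, _, white, rfl⟩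

section Paths

variable {k : ℕ} {T : ℕ × ℕ → Bool}

lemma reflTransGen_blackAdj_of_chain {f : ℕ → ℕ × ℕ} {n : ℕ}
    (hf : ∀ j < n, BlackAdj k T (f j) (f (j + 1))) {i j : ℕ} (hi : i ≤ n) (hj : j ≤ n) :
    ReflTransGen (BlackAdj k T) (f i) (f j) := by
  have up : ∀ i d, i + d ≤ n → ReflTransGen (BlackAdj k T) (f i) (f (i + d)) := by
    intro i d
    induction d with
    | zero => exact fun _ => .refl
    | succ d ih => exact fun h => (ih (by omega)).tail (hf _ (by omega))
  rcases le_total i j with h | h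
  · simpa [Nat.add_sub_cancel' h] using up i (j - i) (by omega)
  · exact Std.Symm.symm _ _ (by simpa [Nat.add_sub_cancel' h] using up j (i - j) (by omega))

lemma reflTransGen_blackAdj_shift {m u v : ℕ} {t : ℕ × ℕ → Bool}
    (hu : u + m ≤ k) (hv : v + m ≤ k) (hT : ∀ a b, a < m → b < m → T (a + u, b + v) = t (a, b))
    {p q : ℕ × ℕ} (h : ReflTransGen (BlackAdj m t) p q) :
    ReflTransGen (BlackAdj k T) (p.1 + u, p.2 + v) (q.1 + u, q.2 + v) := by
  refine ReflTransGen.lift (fun p : ℕ × ℕ => (p.1 + u, p.2 + v)) ?_ p q h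
  rintro a b ⟨⟨ha₁, ha₂⟩, ⟨hb₁, hb₂⟩, hta, htb, hab⟩
  dsimp only [Function.onFun]
  refine ⟨⟨by omega, by omega⟩, ⟨by omega, by omega⟩, ?_, ?_, ?_⟩
  · rwa [hT a.1 a.2 ha₁ ha₂]
  · rwa [hT b.1 b.2 hb₁ hb₂]
  · unfold Adj at hab ⊢; omega

end Paths

/-- The middle cross of the `(2m+1) × (2m+1)` square. -/
def OnCross (m : ℕ) (p : ℕ × ℕ) : Prop := p.1 = m ∨ p.2 = m

lemma reflTransGen_blackAdj_of_onCross {m : ℕ} {T : ℕ × ℕ → Bool}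
    (hT : ∀ p, InSquare (2 * m + 1) p → OnCross m p → T p = true)
    {c : ℕ × ℕ} (hc : InSquare (2 * m + 1) c) (hcross : OnCross m c) :
    ReflTransGen (BlackAdj (2 * m + 1) T) c (m, 0) := by
  have row : ∀ j ≤ 2 * m, ReflTransGen (BlackAdj (2 * m + 1) T) (m, j) (m, 0) := fun j hj =>
    reflTransGen_blackAdj_of_chain (f := fun j => (m, j)) (n := 2 * m)
      (fun j hj => ⟨⟨by omega, by omega⟩, ⟨by omega, by omega⟩,
        hT _ ⟨by omega, by omega⟩ (.inl rfl), hT _ ⟨by omega, by omega⟩ (.inl rfl),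
        .inl ⟨rfl, .inl rfl⟩⟩) hj (Nat.zero_le _)
  obtain ⟨h₁, h₂⟩ := hc
  rcases hcross with h | h
  · rw [show c = (m, c.2) from Prod.ext h rfl]; exact row c.2 (by omega)
  · refine .trans ?_ (row m (by omega))
    rw [show c = (c.1, m) from Prod.ext rfl h]
    exact reflTransGen_blackAdj_of_chain (f := fun i => (i, m)) (n := 2 * m)
      (fun i hi => ⟨⟨by omega, by omega⟩, ⟨by omega, by omega⟩,
        hT _ ⟨by omega, by omega⟩ (.inr rfl), hT _ ⟨by omega, by omega⟩ (.inr rfl),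
        .inr ⟨rfl, .inl rfl⟩⟩) (by omega) (by omega)

def quadrantOrigin (m a : ℕ) : ℕ := if a < m then 0 else m + 1

/-- The image that is black on the middle cross and equals `c u v` on the quadrant with
origin `(u, v)`. -/
def glue (m : ℕ) (c : ℕ → ℕ → ℕ × ℕ → Bool) (p : ℕ × ℕ) : Bool :=
  if p.1 = m ∨ p.2 = m then true
  else c (quadrantOrigin m p.1) (quadrantOrigin m p.2)
    (p.1 - quadrantOrigin m p.1, p.2 - quadrantOrigin m p.2)

section Glue

variable {m : ℕ}

lemma glue_of_onCross (c : ℕ → ℕ → ℕ × ℕ → Bool) {p : ℕ × ℕ} (hp : OnCross m p) :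
    glue m c p = true :=
  if_pos hp

lemma glue_add (c : ℕ → ℕ → ℕ × ℕ → Bool) {u v a b : ℕ} (hu : u = 0 ∨ u = m + 1)
    (hv : v = 0 ∨ v = m + 1) (ha : a < m) (hb : b < m) :
    glue m c (a + u, b + v) = c u v (a, b) := by
  have origin : ∀ {w x}, w = 0 ∨ w = m + 1 → x < m → quadrantOrigin m (x + w) = w := by
    intro w x hw hx
    unfold quadrantOrigin
    split_ifs <;> omega
  rw [glue, if_neg (by omega), origin hu ha, origin hv hb, Nat.add_sub_cancel, Nat.add_sub_cancel]

lemma exists_eq_quadrant_add {p : ℕ × ℕ} (hp : InSquare (2 * m + 1) p) (hcross : ¬ OnCross m p) :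
    ∃ u v a b, (u = 0 ∨ u = m + 1) ∧ (v = 0 ∨ v = m + 1) ∧ a < m ∧ b < m ∧
      p = (a + u, b + v) := by
  obtain ⟨h₁, h₂⟩ := hp
  unfold OnCross at hcross
  refine ⟨quadrantOrigin m p.1, quadrantOrigin m p.2, p.1 - quadrantOrigin m p.1,
    p.2 - quadrantOrigin m p.2, ?_⟩
  unfold quadrantOrigin
  split_ifs <;> refine ⟨by omega, by omega, by omega, by omega, Prod.ext (by omega) (by omega)⟩

lemma onBorder_or_exists_adj_onCross {u v : ℕ} (hu : u = 0 ∨ u = m + 1)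
    (hv : v = 0 ∨ v = m + 1) {q : ℕ × ℕ} (hq : OnBorder m q) :
    OnBorder (2 * m + 1) (q.1 + u, q.2 + v) ∨
      ∃ x, InSquare (2 * m + 1) x ∧ OnCross m x ∧ Adj (q.1 + u, q.2 + v) x := by
  obtain ⟨⟨h₁, h₂⟩, hside⟩ := hq
  by_cases hborder : OnBorder (2 * m + 1) (q.1 + u, q.2 + v)
  · exact .inl hborder
  right
  have hborder : ¬ (q.1 + u = 0 ∨ q.1 + u = 2 * m ∨ q.2 + v = 0 ∨ q.2 + v = 2 * m) :=
    fun h => hborder ⟨⟨by omega, by omega⟩, h⟩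
  rcases hside with h | h | h | h
  · exact ⟨(m, q.2 + v), ⟨by omega, by omega⟩, .inl rfl, .inr ⟨rfl, .inr (by omega)⟩⟩
  · exact ⟨(m, q.2 + v), ⟨by omega, by omega⟩, .inl rfl, .inr ⟨rfl, .inl (by omega)⟩⟩
  · exact ⟨(q.1 + u, m), ⟨by omega, by omega⟩, .inr rfl, .inl ⟨rfl, .inr (by omega)⟩⟩
  · exact ⟨(q.1 + u, m), ⟨by omega, by omega⟩, .inr rfl, .inl ⟨rfl, .inl (by omega)⟩⟩

theorem borderConnected_glue {c : ℕ → ℕ → ℕ × ℕ → Bool}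
    (hc : ∀ u v, BorderConnected m (c u v)) : BorderConnected (2 * m + 1) (glue m c) := by
  have center : OnBorder (2 * m + 1) (m, 0) := ⟨⟨by omega, by omega⟩, .inr (.inr (.inl rfl))⟩
  have toCenter : ∀ x, InSquare (2 * m + 1) x → OnCross m x →
      ReflTransGen (BlackAdj (2 * m + 1) (glue m c)) x (m, 0) := fun x hx hxc =>
    reflTransGen_blackAdj_of_onCross (fun p _ hp => glue_of_onCross c hp) hx hxc
  intro p hp hpb
  by_cases hcross : OnCross m p
  · exact ⟨(m, 0), center, glue_of_onCross c (.inl rfl), toCenter p hp hcross⟩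
  obtain ⟨u, v, a, b, hu, hv, ha, hb, rfl⟩ := exists_eq_quadrant_add hp hcross
  rw [glue_add c hu hv ha hb] at hpb
  obtain ⟨q, hq, hqb, hpq⟩ := hc u v (a, b) ⟨ha, hb⟩ hpb
  have hq_lt : q.1 < m ∧ q.2 < m := hq.1
  have lift := reflTransGen_blackAdj_shift (k := 2 * m + 1) (by omega) (by omega)
    (fun a b ha hb => glue_add c hu hv ha hb) hpq
  have hqb' : glue m c (q.1 + u, q.2 + v) = true := by
    rwa [glue_add c hu hv hq_lt.1 hq_lt.2]
  rcases onBorder_or_exists_adj_onCross hu hv hq with hborder | ⟨x, hx, hxc, hadj⟩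
  · exact ⟨_, hborder, hqb', lift⟩
  · refine ⟨(m, 0), center, glue_of_onCross c (.inl rfl), (lift.tail ?_).trans (toCenter x hx hxc)⟩
    exact ⟨⟨by omega, by omega⟩, hx, hqb', glue_of_onCross c hxc, hadj⟩

end Glue

lemma diffCount_glue_le {m : ℕ} (s : ℕ × ℕ → Bool) (c : ℕ → ℕ → ℕ × ℕ → Bool) :
    diffCount (2 * m + 1) s (glue m c) ≤ 2 * (2 * m + 1) +
      (diffCount m (shiftIm s 0 0) (c 0 0) + diffCount m (shiftIm s 0 (m + 1)) (c 0 (m + 1)) +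
       diffCount m (shiftIm s (m + 1) 0) (c (m + 1) 0) +
       diffCount m (shiftIm s (m + 1) (m + 1)) (c (m + 1) (m + 1))) := by
  set origins : Finset ℕ := {0, m + 1}
  set cross := {m} ×ˢ range (2 * m + 1) ∪ range (2 * m + 1) ×ˢ {m}
  set quadrantDiff : ℕ × ℕ → Finset (ℕ × ℕ) := fun uv =>
    ((range m ×ˢ range m).filter fun p => shiftIm s uv.1 uv.2 p ≠ c uv.1 uv.2 p).image
      fun p => (p.1 + uv.1, p.2 + uv.2)
  have hsub : (range (2 * m + 1) ×ˢ range (2 * m + 1)).filter (fun p => s p ≠ glue m c p) ⊆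
      cross ∪ (origins ×ˢ origins).biUnion quadrantDiff := by
    intro p hp
    rw [mem_filter, mem_product, mem_range, mem_range] at hp
    obtain ⟨⟨h₁, h₂⟩, hne⟩ := hp
    by_cases hcross : OnCross m p
    · refine mem_union_left _ ?_
      simp only [cross, mem_union, mem_product, mem_singleton, mem_range]
      unfold OnCross at hcross
      omega
    obtain ⟨u, v, a, b, hu, hv, ha, hb, rfl⟩ := exists_eq_quadrant_add ⟨h₁, h₂⟩ hcross
    refine mem_union_right _ (mem_biUnion.2 ⟨(u, v), ?_, mem_image.2 ⟨(a, b), ?_, rfl⟩⟩)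
    · simp only [origins, mem_product, mem_insert, mem_singleton]
      exact ⟨hu, hv⟩
    · rw [mem_filter, mem_product, mem_range, mem_range, ← glue_add c hu hv ha hb]
      exact ⟨⟨ha, hb⟩, hne⟩
  have hcross : cross.card ≤ 2 * (2 * m + 1) :=
    (card_union_le _ _).trans (by simp only [card_product, card_singleton, card_range]; omega)
  calc diffCount (2 * m + 1) s (glue m c)
      ≤ cross.card + ((origins ×ˢ origins).biUnion quadrantDiff).card :=
        (card_le_card hsub).trans (card_union_le _ _)
    _ ≤ 2 * (2 * m + 1) +
        ∑ uv ∈ origins ×ˢ origins, diffCount m (shiftIm s uv.1 uv.2) (c uv.1 uv.2) :=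
        add_le_add hcross (card_biUnion_le.trans (sum_le_sum fun _ _ => card_image_le))
    _ = _ := by
        rw [sum_product, sum_pair (by omega), sum_pair (by omega), sum_pair (by omega)]
        ring

theorem distBC_two_mul_add_one_le (m : ℕ) (s : ℕ × ℕ → Bool) :
    distBC (2 * m + 1) s ≤ 2 * (2 * m + 1) +
      (distBC m (shiftIm s 0 0) + distBC m (shiftIm s 0 (m + 1)) +
       distBC m (shiftIm s (m + 1) 0) + distBC m (shiftIm s (m + 1) (m + 1))) := by
  choose c hc hcs using fun u v => exists_borderConnected_diffCount_eq_distBC m (shiftIm s u v)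
  calc distBC (2 * m + 1) s ≤ diffCount (2 * m + 1) s (glue m c) :=
        distBC_le_diffCount (borderConnected_glue hc)
    _ ≤ _ := diffCount_glue_le s c
    _ = _ := by simp only [hcs]

/-- Claim 3.1: for a square `s` of side `k` (with `k + 1 = 2^t`, `t ≥ 3`, so that `s`
splits into four children of side `(k-1)/2` and a middle cross of at most `2k`
pixels), `lc(s) ≤ elc(s) + ∑_{q ∈ ch(s)} lc(q)`, where `lc` is the distance to
border-connectedness and `elc(s) = min(2k, lc(s))`. -/
theorem parent_children_cost_relation (k : ℕ)
    (hk : ∃ t : ℕ, 3 ≤ t ∧ k + 1 = 2 ^ t) (s : ℕ × ℕ → Bool) :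
    distBC k s ≤ min (2 * k) (distBC k s) +
      (distBC ((k - 1) / 2) (shiftIm s 0 0) +
       distBC ((k - 1) / 2) (shiftIm s 0 ((k + 1) / 2)) +
       distBC ((k - 1) / 2) (shiftIm s ((k + 1) / 2) 0) +
       distBC ((k - 1) / 2) (shiftIm s ((k + 1) / 2) ((k + 1) / 2))) := by
  obtain ⟨m, rfl⟩ : ∃ m, k = 2 * m + 1 := by
    obtain ⟨t, ht, hkt⟩ := hk
    have : 2 ∣ k + 1 := hkt ▸ dvd_pow_self 2 (by omega)
    exact ⟨k / 2, by omega⟩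
  rw [show (2 * m + 1 - 1) / 2 = m by omega, show (2 * m + 1 + 1) / 2 = m + 1 by omega,
    ← min_add_add_right]
  exact le_min (distBC_two_mul_add_one_le m s) (Nat.le_add_right _ _)
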